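/- Let n ≥ 1 and Λ = (λ_1,…,λ_n) ∈ (ℂ ∖ {0})^n such that the 2n complex numbers λ_1,…,λ_n, −λ_1,…,−λ_n are pairwise distinct. Then the second Betti number of the generalized complex diamond Lie algebra satisfies b_2(D_{2n+2}(Λ)) = n − 1. -/

import Mathlib

/-! Chevalley–Eilenberg cohomology with trivial coefficients. -/

section CE

variable (K : Type) [Field K] (g : Type) [LieRing g] [LieAlgebra K g]

/-- The argument vector `(⁅X i, X j⁆, X₀, …, X̂ᵢ, …, X̂ⱼ, …)` used in the
Chevalley–Eilenberg coboundary formula; it is only meaningful when `i < j`. -/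
noncomputable def ceArg {m : ℕ} (X : Fin (m + 2) → g) (i j : Fin (m + 2)) : Fin (m + 1) → g :=
  Fin.cons ⁅X i, X j⁆
    (X ∘ j.succAbove ∘ Fin.succAbove (⟨min i.val m, by omega⟩ : Fin (m + 1)))

/-- The Chevalley–Eilenberg coboundary (trivial coefficients), as a bare function:
`(δ f)(X₀,…,X_k) = Σ_{i<j} (−1)^{i+j} f([Xᵢ,Xⱼ], X₀,…,X̂ᵢ,…,X̂ⱼ,…,X_k)`. -/
noncomputable def ceDeltaFun : ∀ k : ℕ, AlternatingMap K g K (Fin k) → (Fin (k + 1) → g) → K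
  | 0, _, _ => 0
  | m + 1, ω, X =>
    ∑ i : Fin (m + 2), ∑ j : Fin (m + 2),
      (if i < j then (-1 : K) ^ ((i : ℕ) + (j : ℕ)) else 0) • ω (ceArg g X i j)

/-- The Chevalley–Eilenberg coboundary as a linear map into the space of functions. -/
noncomputable def ceDelta (k : ℕ) :
    AlternatingMap K g K (Fin k) →ₗ[K] (Fin (k + 1) → g) → K where
  toFun ω := ceDeltaFun K g k ω
  map_add' ω₁ ω₂ := by
    cases k with
    | zero => funext X; simp [ceDeltaFun]
    | succ m =>
      funext X
      simp only [ceDeltaFun, AlternatingMap.add_apply, smul_add, Finset.sum_add_distrib,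
        Pi.add_apply]
  map_smul' c ω := by
    cases k with
    | zero => funext X; simp [ceDeltaFun]
    | succ m =>
      funext X
      simp only [ceDeltaFun, AlternatingMap.smul_apply, ← smul_comm c, ← Finset.smul_sum,
        RingHom.id_apply, Pi.smul_apply]

/-- Alternating forms, viewed as bare functions (a linear inclusion). -/
noncomputable def ceCoe (k : ℕ) : AlternatingMap K g K (Fin k) →ₗ[K] (Fin k → g) → K where
  toFun ω := ⇑ω
  map_add' := by intros; rfl
  map_smul' := by intros; rfl

/-- The space `Z^k(𝔤, K)` of `k`-cocycles. -/
noncomputable def ceZ (k : ℕ) : Submodule K (AlternatingMap K g K (Fin k)) :=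
  LinearMap.ker (ceDelta K g k)

/-- The space `B^k(𝔤, K)` of `k`-coboundaries. -/
noncomputable def ceB : (k : ℕ) → Submodule K (AlternatingMap K g K (Fin k))
  | 0 => ⊥
  | m + 1 => Submodule.comap (ceCoe K g (m + 1)) (LinearMap.range (ceDelta K g m))

/-- The `k`-th Chevalley–Eilenberg cohomology `H^k(𝔤,K) = Z^k(𝔤,K)/B^k(𝔤,K)`
(with trivial coefficients). -/
noncomputable abbrev ceH (k : ℕ) :=
  @HasQuotient.Quotient (ceZ K g k) _ Submodule.hasQuotient
    (Submodule.comap (ceZ K g k).subtype (ceB K g k))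

/-- The `k`-th Betti number `b_k(𝔤) = dim H^k(𝔤, K)`. -/
noncomputable def betti (k : ℕ) : ℕ := Module.finrank K (ceH K g k)

end CE

/-- `DiamondBasis n lam g e` says that the basis `e = (X₀,…,Xₙ,Y₀,…,Yₙ)` of the complex
Lie algebra `g` satisfies exactly the bracket relations of the generalized complex diamond
Lie algebra `D_{2n+2}(Λ)`:
`⁅Y₀, Xᵢ⁆ = λᵢ Xᵢ`, `⁅Y₀, Yᵢ⁆ = −λᵢ Yᵢ`, `⁅Xᵢ, Yᵢ⁆ = λᵢ X₀` for `1 ≤ i ≤ n`, all other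
brackets of basis vectors being zero.  Here `Sum.inl i` plays the role of `Xᵢ` and
`Sum.inr i` of `Yᵢ`. -/
def DiamondBasis (n : ℕ) (lam : Fin n → ℂ) (g : Type) [LieRing g] [LieAlgebra ℂ g]
    (e : Module.Basis (Fin (n + 1) ⊕ Fin (n + 1)) ℂ g) : Prop :=
  (∀ i : Fin n, ⁅e (Sum.inr 0), e (Sum.inl i.succ)⁆ = lam i • e (Sum.inl i.succ)) ∧
  (∀ i : Fin n, ⁅e (Sum.inr 0), e (Sum.inr i.succ)⁆ = -(lam i • e (Sum.inr i.succ))) ∧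
  (∀ i : Fin n, ⁅e (Sum.inl i.succ), e (Sum.inr i.succ)⁆ = lam i • e (Sum.inl 0)) ∧
  (∀ u, ⁅e (Sum.inl 0), e u⁆ = 0) ∧
  (∀ i j : Fin n, ⁅e (Sum.inl i.succ), e (Sum.inl j.succ)⁆ = 0) ∧
  (∀ i j : Fin n, ⁅e (Sum.inr i.succ), e (Sum.inr j.succ)⁆ = 0) ∧
  (∀ i j : Fin n, i ≠ j → ⁅e (Sum.inl i.succ), e (Sum.inr j.succ)⁆ = 0)

set_option linter.unusedSectionVars false
set_option linter.unreachableTactic false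
set_option linter.unusedTactic false
section Helpers
variable {g : Type} [LieRing g] [LieAlgebra ℂ g]

lemma fin1_eq (a : g) (v : Fin 1 → g) (h : v 0 = a) : v = ![a] := by
  funext i; fin_cases i; simpa using h

lemma ceArg_01 (X : Fin 3 → g) : ceArg g X 0 1 = ![⁅X 0, X 1⁆, X 2] := by
  funext k; fin_cases k <;> simp [ceArg, Fin.succAbove] <;> rfl

lemma ceArg_02 (X : Fin 3 → g) : ceArg g X 0 2 = ![⁅X 0, X 2⁆, X 1] := by
  funext k; fin_cases k <;> simp [ceArg, Fin.succAbove] <;> rfl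

lemma ceArg_12 (X : Fin 3 → g) : ceArg g X 1 2 = ![⁅X 1, X 2⁆, X 0] := by
  funext k; fin_cases k <;> simp [ceArg, Fin.succAbove] <;> rfl

lemma ceDeltaFun_one (f : AlternatingMap ℂ g ℂ (Fin 1)) (X : Fin 2 → g) :
    ceDeltaFun ℂ g 1 f X = -f ![⁅X 0, X 1⁆] := by
  show (∑ i : Fin 2, ∑ j : Fin 2, _) = _
  rw [Fin.sum_univ_two, Fin.sum_univ_two, Fin.sum_univ_two]
  have h01 : ceArg g X 0 1 = ![⁅X 0, X 1⁆] := by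
    apply fin1_eq; simp [ceArg]
  norm_num [h01]

lemma ceDeltaFun_two (ω : AlternatingMap ℂ g ℂ (Fin 2)) (X : Fin 3 → g) :
    ceDeltaFun ℂ g 2 ω X =
      -ω ![⁅X 0, X 1⁆, X 2] + ω ![⁅X 0, X 2⁆, X 1] - ω ![⁅X 1, X 2⁆, X 0] := by
  show (∑ i : Fin 3, ∑ j : Fin 3, _) = _
  rw [Fin.sum_univ_three, Fin.sum_univ_three, Fin.sum_univ_three, Fin.sum_univ_three]
  rw [ceArg_01, ceArg_02, ceArg_12]
  norm_num [Fin.lt_def]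
  ring

end Helpers
section Helpers2
variable {g : Type} [LieRing g] [LieAlgebra ℂ g]

lemma upd0 (x a c : g) : Function.update ![x, c] 0 a = ![a, c] := by
  funext i; fin_cases i <;> simp
lemma upd1 (x a c : g) : Function.update ![c, x] 1 a = ![c, a] := by
  funext i; fin_cases i <;> simp

lemma ω2_add_left (ω : AlternatingMap ℂ g ℂ (Fin 2)) (a b c : g) :
    ω ![a + b, c] = ω ![a, c] + ω ![b, c] := by
  have := ω.map_update_add ![a, c] 0 a b
  rwa [upd0, upd0, upd0] at this

lemma ω2_add_right (ω : AlternatingMap ℂ g ℂ (Fin 2)) (a b c : g) :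
    ω ![c, a + b] = ω ![c, a] + ω ![c, b] := by
  have := ω.map_update_add ![c, a] 1 a b
  rwa [upd1, upd1, upd1] at this

lemma ω2_smul_left (ω : AlternatingMap ℂ g ℂ (Fin 2)) (t : ℂ) (a c : g) :
    ω ![t • a, c] = t * ω ![a, c] := by
  have := ω.map_update_smul ![a, c] 0 t a
  rw [upd0, upd0] at this; rw [this]; simp

lemma ω2_smul_right (ω : AlternatingMap ℂ g ℂ (Fin 2)) (t : ℂ) (a c : g) :
    ω ![c, t • a] = t * ω ![c, a] := by
  have := ω.map_update_smul ![c, a] 1 t a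
  rw [upd1, upd1] at this; rw [this]; simp

lemma ω2_zero_left (ω : AlternatingMap ℂ g ℂ (Fin 2)) (c : g) : ω ![(0 : g), c] = 0 := by
  have := ω2_smul_left ω 0 0 c; simpa using this

lemma ω2_zero_right (ω : AlternatingMap ℂ g ℂ (Fin 2)) (c : g) : ω ![c, (0 : g)] = 0 := by
  have := ω2_smul_right ω 0 0 c; simpa using this

lemma ω2_swap (ω : AlternatingMap ℂ g ℂ (Fin 2)) (a c : g) : ω ![a, c] = -ω ![c, a] := by
  have h : (![c, a] ∘ Equiv.swap (0 : Fin 2) 1) = ![a, c] := by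
    funext i; fin_cases i <;> simp [Equiv.swap_apply_of_ne_of_ne]
  have := ω.map_swap ![c, a] (show (0 : Fin 2) ≠ 1 by decide)
  rw [h] at this; rw [this]

lemma ω2_neg_left (ω : AlternatingMap ℂ g ℂ (Fin 2)) (a c : g) : ω ![-a, c] = -ω ![a, c] := by
  have := ω2_smul_left ω (-1) a c; simpa using this

lemma ω2_neg_right (ω : AlternatingMap ℂ g ℂ (Fin 2)) (a c : g) : ω ![c, -a] = -ω ![c, a] := by
  have := ω2_smul_right ω (-1) a c; simpa using this

/-- wedge of two linear functionals as an alternating 2-form -/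
noncomputable def w2 (f h : g →ₗ[ℂ] ℂ) : AlternatingMap ℂ g ℂ (Fin 2) where
  toMultilinearMap :=
  { toFun := fun X => f (X 0) * h (X 1) - f (X 1) * h (X 0)
    map_update_add' := by
      intro _ X i a b
      fin_cases i <;> simp [Function.update, Fin.ext_iff] <;> ring
    map_update_smul' := by
      intro _ X i t a
      fin_cases i <;> simp [Function.update, Fin.ext_iff, smul_eq_mul] <;> ring }
  map_eq_zero_of_eq' v i j hv hij := by
    fin_cases i <;> fin_cases j <;> simp_all <;> ring_nf <;> simp [hv]

@[simp] lemma w2_apply (f h : g →ₗ[ℂ] ℂ) (a c : g) :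
    w2 f h ![a, c] = f a * h c - f c * h a := rfl

end Helpers2
section Main
variable {n : ℕ} {lam : Fin n → ℂ} {g : Type} [LieRing g] [LieAlgebra ℂ g]
  {e : Module.Basis (Fin (n + 1) ⊕ Fin (n + 1)) ℂ g}

lemma coord_self (a b : Fin (n + 1) ⊕ Fin (n + 1)) :
    e.coord a (e b) = if b = a then 1 else 0 := by
  simp [Module.Basis.coord_apply, Module.Basis.repr_self, Finsupp.single_apply]

section Brackets
variable (he : DiamondBasis n lam g e)
include he

lemma br1 (i : Fin n) : ⁅e (.inr 0), e (.inl i.succ)⁆ = lam i • e (.inl i.succ) := he.1 i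
lemma br1' (i : Fin n) : ⁅e (.inl i.succ), e (.inr 0)⁆ = -(lam i • e (.inl i.succ)) := by
  rw [← lie_skew, br1 he]
lemma br2 (i : Fin n) : ⁅e (.inr 0), e (.inr i.succ)⁆ = -(lam i • e (.inr i.succ)) := he.2.1 i
lemma br2' (i : Fin n) : ⁅e (.inr i.succ), e (.inr 0)⁆ = lam i • e (.inr i.succ) := by
  rw [← lie_skew, br2 he, neg_neg]
lemma br3 (i : Fin n) : ⁅e (.inl i.succ), e (.inr i.succ)⁆ = lam i • e (.inl 0) := he.2.2.1 i
lemma br4 (u) : ⁅e (.inl 0), e u⁆ = 0 := he.2.2.2.1 u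
lemma br4' (u) : ⁅e u, e (.inl 0)⁆ = 0 := by rw [← lie_skew, br4 he, neg_zero]
lemma br8 : ⁅e (.inr 0), e (.inr 0)⁆ = (0 : g) := lie_self _

lemma brLL (a b : Fin (n + 1)) : ⁅e (.inl a), e (.inl b)⁆ = 0 := by
  induction a using Fin.cases with
  | zero => exact br4 he _
  | succ a =>
    induction b using Fin.cases with
    | zero => exact br4' he _
    | succ b => exact he.2.2.2.2.1 a b

lemma br37 (a b : Fin n) :
    ⁅e (.inl a.succ), e (.inr b.succ)⁆ = if a = b then lam a • e (.inl 0) else 0 := by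
  rcases eq_or_ne a b with rfl | hab
  · simp [he.2.2.1 a]
  · simp [he.2.2.2.2.2.2 a b hab, hab]

lemma br37' (a b : Fin n) :
    ⁅e (.inr b.succ), e (.inl a.succ)⁆ = -if a = b then lam a • e (.inl 0) else 0 := by
  rw [← lie_skew, br37 he]

lemma brRR (a b : Fin n) : ⁅e (.inr a.succ), e (.inr b.succ)⁆ = 0 := he.2.2.2.2.2.1 a b

/-- X_i-coordinate of a bracket. -/
lemma coordX_bracket (i : Fin n) (x y : g) :
    e.coord (.inl i.succ) ⁅x, y⁆ =
      lam i * (e.coord (.inr 0) x * e.coord (.inl i.succ) y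
        - e.coord (.inl i.succ) x * e.coord (.inr 0) y) := by
  have key : ∀ a b, e.coord (.inl i.succ) ⁅e a, e b⁆ =
      lam i * (e.coord (.inr 0) (e a) * e.coord (.inl i.succ) (e b)
        - e.coord (.inl i.succ) (e a) * e.coord (.inr 0) (e b)) := by
    intro a b
    rcases a with a | a <;> rcases b with b | b
    · rw [brLL he]; simp [coord_self]
    · induction a using Fin.cases with
      | zero => rw [br4 he]; simp [coord_self, (Fin.succ_ne_zero i).symm]
      | succ a =>
        induction b using Fin.cases with
        | zero =>
          rw [br1' he]
          simp only [coord_self, map_neg, map_smul, smul_eq_mul]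
          rcases eq_or_ne a i with rfl | hai
          · simp
          · simp [(Fin.succ_injective n).ne hai, hai]
        | succ b =>
          rw [br37 he]
          rcases eq_or_ne a b with rfl | hab
          · simp [coord_self, Finsupp.single_apply, Fin.succ_ne_zero,
              (Fin.succ_ne_zero i).symm]
          · simp [coord_self, Finsupp.single_apply, Fin.succ_ne_zero,
              (Fin.succ_ne_zero i).symm, hab]
    · induction b using Fin.cases with
      | zero => rw [br4' he]; simp [coord_self, (Fin.succ_ne_zero i).symm]
      | succ b =>
        induction a using Fin.cases with
        | zero =>
          rw [br1 he]
          simp only [coord_self, map_smul, smul_eq_mul]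
          rcases eq_or_ne b i with rfl | hbi
          · simp
          · simp [(Fin.succ_injective n).ne hbi, hbi]
        | succ a =>
          rw [br37' he]
          rcases eq_or_ne b a with rfl | hab
          · simp [coord_self, Finsupp.single_apply, Fin.succ_ne_zero,
              (Fin.succ_ne_zero i).symm]
          · simp [coord_self, Finsupp.single_apply, Fin.succ_ne_zero,
              (Fin.succ_ne_zero i).symm, hab]
    · induction a using Fin.cases with
      | zero =>
        induction b using Fin.cases with
        | zero => rw [br8 he]; simp [coord_self]
        | succ b =>
          rw [br2 he]
          simp [coord_self]
      | succ a =>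
        induction b using Fin.cases with
        | zero =>
          rw [br2' he]
          simp [coord_self]
        | succ b => rw [brRR he]; simp [coord_self]
  let B : g →ₗ[ℂ] g →ₗ[ℂ] ℂ := LinearMap.mk₂ ℂ
    (fun x y => e.coord (.inl i.succ) ⁅x, y⁆
      - lam i * (e.coord (.inr 0) x * e.coord (.inl i.succ) y
        - e.coord (.inl i.succ) x * e.coord (.inr 0) y))
    (by intro a b c; simp [add_lie]; ring)
    (by intro t a c; simp [smul_lie, smul_eq_mul]; ring)
    (by intro a b c; simp [lie_add]; ring)
    (by intro t a c; simp [lie_smul, smul_eq_mul]; ring)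
  have hB : B = 0 := by
    apply e.ext; intro a; apply e.ext; intro b
    simp only [LinearMap.mk₂_apply, LinearMap.zero_apply, B, key, sub_self]
  have := congrFun (congrArg (fun (B : g →ₗ[ℂ] g →ₗ[ℂ] ℂ) (x : g) => B x y) hB) x
  simpa [B, sub_eq_zero] using this

end Brackets
end Main
section Main2
variable {n : ℕ} {lam : Fin n → ℂ} {g : Type} [LieRing g] [LieAlgebra ℂ g]
  {e : Module.Basis (Fin (n + 1) ⊕ Fin (n + 1)) ℂ g} (he : DiamondBasis n lam g e)
include he

/-- Y_i-coordinate of a bracket. -/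
lemma coordY_bracket (i : Fin n) (x y : g) :
    e.coord (.inr i.succ) ⁅x, y⁆ =
      -lam i * (e.coord (.inr 0) x * e.coord (.inr i.succ) y
        - e.coord (.inr i.succ) x * e.coord (.inr 0) y) := by
  have key : ∀ a b, e.coord (.inr i.succ) ⁅e a, e b⁆ =
      -lam i * (e.coord (.inr 0) (e a) * e.coord (.inr i.succ) (e b)
        - e.coord (.inr i.succ) (e a) * e.coord (.inr 0) (e b)) := by
    intro a b
    rcases a with a | a <;> rcases b with b | b
    · rw [brLL he]; simp [coord_self]
    · induction a using Fin.cases with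
      | zero => rw [br4 he]; simp [coord_self]
      | succ a =>
        induction b using Fin.cases with
        | zero =>
          rw [br1' he]
          simp [coord_self, Finsupp.single_apply, (Fin.succ_ne_zero i).symm]
        | succ b =>
          rw [br37 he]
          rcases eq_or_ne a b with rfl | hab
          · simp [coord_self, Finsupp.single_apply, Fin.succ_ne_zero,
              (Fin.succ_ne_zero i).symm]
          · simp [coord_self, Finsupp.single_apply, Fin.succ_ne_zero,
              (Fin.succ_ne_zero i).symm, hab]
    · induction b using Fin.cases with
      | zero => rw [br4' he]; simp [coord_self]
      | succ b =>
        induction a using Fin.cases with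
        | zero =>
          rw [br1 he]
          simp [coord_self, Finsupp.single_apply, (Fin.succ_ne_zero i).symm]
        | succ a =>
          rw [br37' he]
          rcases eq_or_ne b a with rfl | hab
          · simp [coord_self, Finsupp.single_apply, Fin.succ_ne_zero,
              (Fin.succ_ne_zero i).symm]
          · simp [coord_self, Finsupp.single_apply, Fin.succ_ne_zero,
              (Fin.succ_ne_zero i).symm, hab]
    · induction a using Fin.cases with
      | zero =>
        induction b using Fin.cases with
        | zero => rw [br8 he]; simp [coord_self]
        | succ b =>
          rw [br2 he]
          simp only [coord_self, map_neg, map_smul, smul_eq_mul]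
          rcases eq_or_ne b i with rfl | hbi
          · simp [Fin.succ_ne_zero, (Fin.succ_ne_zero b).symm]
          · simp [(Fin.succ_injective n).ne hbi, hbi, Fin.succ_ne_zero,
              (Fin.succ_ne_zero i).symm]
      | succ a =>
        induction b using Fin.cases with
        | zero =>
          rw [br2' he]
          simp only [coord_self, map_smul, smul_eq_mul]
          rcases eq_or_ne a i with rfl | hai
          · simp [Fin.succ_ne_zero, (Fin.succ_ne_zero a).symm]
          · simp [(Fin.succ_injective n).ne hai, hai, Fin.succ_ne_zero,
              (Fin.succ_ne_zero i).symm]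
        | succ b =>
          rw [brRR he]
          simp [coord_self, Finsupp.single_apply, Fin.succ_ne_zero]
  let B : g →ₗ[ℂ] g →ₗ[ℂ] ℂ := LinearMap.mk₂ ℂ
    (fun x y => e.coord (.inr i.succ) ⁅x, y⁆
      - (-lam i) * (e.coord (.inr 0) x * e.coord (.inr i.succ) y
        - e.coord (.inr i.succ) x * e.coord (.inr 0) y))
    (by intro a b c; simp [add_lie]; ring)
    (by intro t a c; simp [smul_lie, smul_eq_mul]; ring)
    (by intro a b c; simp [lie_add]; ring)
    (by intro t a c; simp [lie_smul, smul_eq_mul]; ring)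
  have hB : B = 0 := by
    apply e.ext; intro a; apply e.ext; intro b
    simp only [LinearMap.mk₂_apply, LinearMap.zero_apply, B, key, sub_self]
  have := congrFun (congrArg (fun (B : g →ₗ[ℂ] g →ₗ[ℂ] ℂ) (x : g) => B x y) hB) x
  simp only [LinearMap.mk₂_apply, LinearMap.zero_apply, B, sub_eq_zero] at this
  rw [this]

end Main2
section Main3
variable {n : ℕ} {lam : Fin n → ℂ} {g : Type} [LieRing g] [LieAlgebra ℂ g]
  {e : Module.Basis (Fin (n + 1) ⊕ Fin (n + 1)) ℂ g}

lemma ω2_same (ω : AlternatingMap ℂ g ℂ (Fin 2)) (a : g) : ω ![a, a] = 0 :=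
  ω.map_eq_zero_of_eq ![a, a] (i := 0) (j := 1) rfl (by decide)

variable (he : DiamondBasis n lam g e)
include he

lemma beta_cocycle (i : Fin n) :
    ceDelta ℂ g 2 (w2 (e.coord (.inl i.succ)) (e.coord (.inr i.succ))) = 0 := by
  show ceDeltaFun ℂ g 2 _ = 0
  funext X
  rw [ceDeltaFun_two]
  simp only [w2_apply, Pi.zero_apply]
  rw [coordX_bracket he, coordX_bracket he, coordX_bracket he,
    coordY_bracket he, coordY_bracket he, coordY_bracket he]
  ring

lemma exists_F (hl : ∀ i, lam i ≠ 0)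
    (hd : Function.Injective (Sum.elim lam (fun i => -lam i) : Fin n ⊕ Fin n → ℂ))
    (hn : 1 ≤ n) (ω : AlternatingMap ℂ g ℂ (Fin 2))
    (hω : ∀ X : Fin 3 → g, ceDeltaFun ℂ g 2 ω X = 0) (t : ℂ)
    (ht : ∀ i : Fin n, ω ![e (.inl i.succ), e (.inr i.succ)] = t * lam i) :
    ∃ F : g →ₗ[ℂ] ℂ, ∀ x y : g, ω ![x, y] = -F ⁅x, y⁆ := by
  have hne1 : ∀ i j : Fin n, lam i + lam j ≠ 0 := by
    intro i j h
    have : Sum.elim lam (fun i => -lam i) (Sum.inl i) =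
        Sum.elim lam (fun i => -lam i) (Sum.inr j) := by
      simp; linear_combination h
    exact absurd (hd this) (by simp)
  have hne2 : ∀ i j : Fin n, i ≠ j → lam i ≠ lam j := by
    intro i j hij h
    exact hij (Sum.inl_injective (hd (show Sum.elim lam (fun i => -lam i) (Sum.inl i) = _ by simpa)))
  have hc : ∀ a b c : g, -ω ![⁅a, b⁆, c] + ω ![⁅a, c⁆, b] - ω ![⁅b, c⁆, a] = 0 := by
    intro a b c
    have := hω ![a, b, c]
    rwa [ceDeltaFun_two] at this
  -- basic vanishing facts
  have f1 : ω ![(e (Sum.inl (0 : Fin (n+1)))), (e (Sum.inr (0 : Fin (n+1))))] = 0 := by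
    set i : Fin n := ⟨0, hn⟩
    have h := hc (e (Sum.inr (0 : Fin (n+1)))) (e (.inl i.succ)) (e (.inr i.succ))
    rw [br1 he, br2 he, br3 he] at h
    rw [ω2_smul_left, ω2_neg_left, ω2_smul_left, ω2_smul_left] at h
    rw [ω2_swap ω (e (.inr i.succ)) (e (.inl i.succ))] at h
    have : lam i * ω ![(e (Sum.inl (0 : Fin (n+1)))), (e (Sum.inr (0 : Fin (n+1))))] = 0 := by linear_combination -h
    exact (mul_eq_zero.mp this).resolve_left (hl i)
  have f2 : ∀ u, ω ![(e (Sum.inl (0 : Fin (n+1)))), e u] = 0 := by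
    intro u
    have h := hc (e (Sum.inr (0 : Fin (n+1)))) (e (Sum.inl (0 : Fin (n+1)))) (e u)
    rw [show ⁅(e (Sum.inr (0 : Fin (n+1)))), (e (Sum.inl (0 : Fin (n+1))))⁆ = 0 from by rw [← lie_skew, br4 he, neg_zero],
      show ⁅(e (Sum.inl (0 : Fin (n+1)))), e u⁆ = 0 from br4 he u] at h
    rw [ω2_zero_left, ω2_zero_left] at h
    rcases u with a | a
    · induction a using Fin.cases with
      | zero => exact ω2_same ω (e (Sum.inl (0 : Fin (n+1))))
      | succ a =>
        rw [br1 he, ω2_smul_left] at h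
        have : lam a * ω ![e (.inl a.succ), (e (Sum.inl (0 : Fin (n+1))))] = 0 := by
          linear_combination h
        have h2 := (mul_eq_zero.mp this).resolve_left (hl a)
        rw [ω2_swap]; rw [h2]; ring
    · induction a using Fin.cases with
      | zero => exact f1
      | succ a =>
        rw [br2 he, ω2_neg_left, ω2_smul_left] at h
        have : lam a * ω ![e (.inr a.succ), (e (Sum.inl (0 : Fin (n+1))))] = 0 := by linear_combination -h
        have h2 := (mul_eq_zero.mp this).resolve_left (hl a)
        rw [ω2_swap]; rw [h2]; ring
  have f3 : ∀ i j : Fin n, ω ![e (.inl i.succ), e (.inl j.succ)] = 0 := by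
    intro i j
    have h := hc (e (Sum.inr (0 : Fin (n+1)))) (e (.inl i.succ)) (e (.inl j.succ))
    rw [br1 he, br1 he, brLL he, ω2_smul_left, ω2_smul_left, ω2_zero_left] at h
    rw [ω2_swap ω (e (.inl j.succ)) (e (.inl i.succ))] at h
    have : (lam i + lam j) * ω ![e (.inl i.succ), e (.inl j.succ)] = 0 := by
      linear_combination -h
    exact (mul_eq_zero.mp this).resolve_left (hne1 i j)
  have f4 : ∀ i j : Fin n, ω ![e (.inr i.succ), e (.inr j.succ)] = 0 := by
    intro i j
    have h := hc (e (Sum.inr (0 : Fin (n+1)))) (e (.inr i.succ)) (e (.inr j.succ))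
    rw [br2 he, br2 he, brRR he, ω2_neg_left, ω2_neg_left, ω2_smul_left, ω2_smul_left,
      ω2_zero_left] at h
    rw [ω2_swap ω (e (.inr j.succ)) (e (.inr i.succ))] at h
    have : (lam i + lam j) * ω ![e (.inr i.succ), e (.inr j.succ)] = 0 := by
      linear_combination h
    exact (mul_eq_zero.mp this).resolve_left (hne1 i j)
  have f5 : ∀ i j : Fin n, i ≠ j → ω ![e (.inl i.succ), e (.inr j.succ)] = 0 := by
    intro i j hij
    have h := hc (e (Sum.inr (0 : Fin (n+1)))) (e (.inl i.succ)) (e (.inr j.succ))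
    rw [br1 he, br2 he, br37 he, if_neg hij, ω2_smul_left, ω2_neg_left, ω2_smul_left,
      ω2_zero_left] at h
    rw [ω2_swap ω (e (.inr j.succ)) (e (.inl i.succ))] at h
    have : (lam j - lam i) * ω ![e (.inl i.succ), e (.inr j.succ)] = 0 := by
      linear_combination h
    exact (mul_eq_zero.mp this).resolve_left (sub_ne_zero.mpr (Ne.symm (hne2 i j hij)))
  -- the primitive
  set coeffs : (Fin (n + 1) ⊕ Fin (n + 1)) → ℂ :=
    Sum.elim (Fin.cases (-t) (fun i => -ω ![(e (Sum.inr (0 : Fin (n+1)))), e (.inl i.succ)] / lam i))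
      (Fin.cases 0 (fun i => ω ![(e (Sum.inr (0 : Fin (n+1)))), e (.inr i.succ)] / lam i)) with hcoeffs
  set F : g →ₗ[ℂ] ℂ := Module.Basis.constr e ℂ coeffs with hF
  have hFb : ∀ u, F (e u) = coeffs u := fun u => Module.Basis.constr_basis e ℂ coeffs u
  refine ⟨F, ?_⟩
  have key : ∀ a b, ω ![e a, e b] = -F ⁅e a, e b⁆ := by
    intro a b
    rcases a with a | a <;> rcases b with b | b
    · rw [brLL he, map_zero, neg_zero]
      induction a using Fin.cases with
      | zero => exact f2 _
      | succ a =>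
        induction b using Fin.cases with
        | zero => rw [ω2_swap, f2]; ring
        | succ b => exact f3 a b
    · induction a using Fin.cases with
      | zero => rw [br4 he, map_zero, neg_zero]; exact f2 _
      | succ a =>
        induction b using Fin.cases with
        | zero =>
          rw [br1' he, map_neg, map_smul, hFb, neg_neg, smul_eq_mul]
          simp only [hcoeffs, Sum.elim_inl, Fin.cases_succ]
          rw [ω2_swap]
          field_simp [hl a]
        | succ b =>
          rw [br37 he]
          rcases eq_or_ne a b with rfl | hab
          · rw [if_pos rfl, map_smul, hFb, smul_eq_mul]
            simp only [hcoeffs, Sum.elim_inl, Fin.cases_zero]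
            rw [ht a]; ring
          · rw [if_neg hab, map_zero, neg_zero]; exact f5 a b hab
    · induction b using Fin.cases with
      | zero =>
        rw [br4' he, map_zero, neg_zero, ω2_swap, f2]; ring
      | succ b =>
        induction a using Fin.cases with
        | zero =>
          rw [br1 he, map_smul, hFb, smul_eq_mul]
          simp only [hcoeffs, Sum.elim_inl, Fin.cases_succ]
          field_simp [hl b]
        | succ a =>
          rw [br37' he]
          rcases eq_or_ne b a with rfl | hab
          · rw [if_pos rfl, map_neg, map_smul, hFb, neg_neg, smul_eq_mul]
            simp only [hcoeffs, Sum.elim_inl, Fin.cases_zero]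
            rw [ω2_swap, ht b]; ring
          · rw [if_neg hab, neg_zero, map_zero, neg_zero, ω2_swap, f5 b a hab]; ring
    · induction a using Fin.cases with
      | zero =>
        induction b using Fin.cases with
        | zero => rw [br8 he, map_zero, neg_zero]; exact ω2_same ω (e (Sum.inr (0 : Fin (n+1))))
        | succ b =>
          rw [br2 he, map_neg, map_smul, hFb, neg_neg, smul_eq_mul]
          simp only [hcoeffs, Sum.elim_inr, Fin.cases_succ]
          field_simp [hl b]
      | succ a =>
        induction b using Fin.cases with
        | zero =>
          rw [br2' he, map_smul, hFb, smul_eq_mul]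
          simp only [hcoeffs, Sum.elim_inr, Fin.cases_succ]
          rw [ω2_swap]
          field_simp [hl a]
        | succ b => rw [brRR he, map_zero, neg_zero]; exact f4 a b
  -- extend to all vectors by bilinearity
  intro x y
  let B : g →ₗ[ℂ] g →ₗ[ℂ] ℂ := LinearMap.mk₂ ℂ
    (fun x y => ω ![x, y] + F ⁅x, y⁆)
    (by intro a b c; rw [ω2_add_left, add_lie, map_add]; ring)
    (by intro s a c; rw [ω2_smul_left, smul_lie, map_smul]; simp only [smul_eq_mul]; ring)
    (by intro a b c; rw [ω2_add_right, lie_add, map_add]; ring)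
    (by intro s a c; rw [ω2_smul_right, lie_smul, map_smul]; simp only [smul_eq_mul]; ring)
  have hB : B = 0 := by
    apply e.ext; intro a; apply e.ext; intro b
    simp only [LinearMap.mk₂_apply, LinearMap.zero_apply, B, key]
    ring
  have := congrFun (congrArg (fun (B : g →ₗ[ℂ] g →ₗ[ℂ] ℂ) (x : g) => B x y) hB) x
  simp only [LinearMap.mk₂_apply, LinearMap.zero_apply, B] at this
  linear_combination this

end Main3
section Final

lemma upd0s {g : Type} [AddCommGroup g] [Module ℂ g] (x a : g) :
    Function.update ![x] 0 a = ![a] := by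
  funext i; fin_cases i <;> simp

lemma ω1_smul {g : Type} [AddCommGroup g] [Module ℂ g]
    (f : AlternatingMap ℂ g ℂ (Fin 1)) (t : ℂ) (a : g) : f ![t • a] = t * f ![a] := by
  have := f.map_update_smul ![a] 0 t a
  rw [upd0s, upd0s] at this; rw [this]; simp

/-- If the `2n` numbers `λ₁,…,λₙ,−λ₁,…,−λₙ` (all `λᵢ ≠ 0`) are pairwise distinct, then
the second Betti number of the generalized complex diamond Lie algebra `D_{2n+2}(Λ)` is
`n − 1`. -/
theorem betti_two_diamond_distinct_lambdas (n : ℕ) (hn : 1 ≤ n) (lam : Fin n → ℂ)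
    (hlam : ∀ i, lam i ≠ 0)
    (hdistinct : Function.Injective (Sum.elim lam (fun i => -lam i) : Fin n ⊕ Fin n → ℂ))
    (g : Type) [LieRing g] [LieAlgebra ℂ g] (e : Module.Basis (Fin (n + 1) ⊕ Fin (n + 1)) ℂ g)
    (he : DiamondBasis n lam g e) :
    betti ℂ g 2 = n - 1 := by
  classical
  set Z : Submodule ℂ (AlternatingMap ℂ g ℂ (Fin 2)) := ceZ ℂ g 2 with hZ
  let Ψ : AlternatingMap ℂ g ℂ (Fin 2) →ₗ[ℂ] (Fin n → ℂ) :=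
  { toFun := fun ω i => ω ![e (.inl i.succ), e (.inr i.succ)]
    map_add' := fun ω₁ ω₂ => by funext i; simp
    map_smul' := fun c ω => by funext i; simp }
  set L : Submodule ℂ (Fin n → ℂ) := Submodule.span ℂ {lam} with hL
  let q : Z →ₗ[ℂ] ((Fin n → ℂ) ⧸ L) := L.mkQ ∘ₗ (Ψ ∘ₗ Z.subtype)
  have hΨβ : ∀ i j : Fin n,
      Ψ (w2 (e.coord (.inl i.succ)) (e.coord (.inr i.succ))) j = if j = i then 1 else 0 := by
    intro i j
    show w2 _ _ ![e (.inl j.succ), e (.inr j.succ)] = _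
    rw [w2_apply]
    simp only [coord_self, Fin.succ_inj]
    rcases eq_or_ne j i with rfl | h
    · simp
    · simp [h, (Sum.inl_injective.comp (Fin.succ_injective n)).ne h,
        (Sum.inr_injective.comp (Fin.succ_injective n)).ne h]
  have hsurj : Function.Surjective q := by
    intro cq
    obtain ⟨c, rfl⟩ := L.mkQ_surjective cq
    refine ⟨⟨∑ i : Fin n, c i • w2 (e.coord (.inl i.succ)) (e.coord (.inr i.succ)), ?_⟩, ?_⟩
    · show _ ∈ LinearMap.ker (ceDelta ℂ g 2)
      rw [LinearMap.mem_ker, map_sum]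
      refine Finset.sum_eq_zero fun i _ => ?_
      rw [map_smul, beta_cocycle he i, smul_zero]
    · show L.mkQ (Ψ _) = L.mkQ c
      congr 1
      show Ψ (∑ i : Fin n, c i • w2 (e.coord (.inl i.succ)) (e.coord (.inr i.succ))) = c
      rw [map_sum]
      funext j
      rw [Finset.sum_apply]
      simp only [LinearMap.map_smul, Pi.smul_apply, smul_eq_mul, hΨβ]
      simp [Finset.sum_ite_eq]
  have hker : LinearMap.ker q = Submodule.comap Z.subtype (ceB ℂ g 2) := by
    ext ⟨ω, hωZ⟩
    have hωZ' : ceDelta ℂ g 2 ω = 0 := LinearMap.mem_ker.mp hωZ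
    simp only [LinearMap.mem_ker, q, LinearMap.comp_apply, Submodule.mkQ_apply,
      Submodule.Quotient.mk_eq_zero, Submodule.mem_comap, Submodule.subtype_apply]
    constructor
    · intro hmem
      obtain ⟨t, ht⟩ := Submodule.mem_span_singleton.mp hmem
      have hω' : ∀ X : Fin 3 → g, ceDeltaFun ℂ g 2 ω X = 0 := fun X => congrFun hωZ' X
      obtain ⟨F, hF⟩ := exists_F he hlam hdistinct hn ω hω' t (fun i => by
        have := congrFun ht i
        have h := this.symm; simp at h; exact h)
      show ω ∈ Submodule.comap (ceCoe ℂ g 2) (LinearMap.range (ceDelta ℂ g 1))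
      refine Submodule.mem_comap.mpr ⟨AlternatingMap.ofSubsingleton ℂ g ℂ 0 F, ?_⟩
      funext X
      have hXv : X = ![X 0, X 1] := by funext i; fin_cases i <;> rfl
      show ceDeltaFun ℂ g 1 _ X = ω X
      rw [ceDeltaFun_one]
      have : (AlternatingMap.ofSubsingleton ℂ g ℂ 0 F) ![⁅X 0, X 1⁆] = F ⁅X 0, X 1⁆ := rfl
      rw [this]
      conv_rhs => rw [hXv]
      exact (hF (X 0) (X 1)).symm
    · intro hmem
      have hmem' : ∃ f, ceDelta ℂ g 1 f = ⇑ω := by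
        obtain ⟨f, hf⟩ := Submodule.mem_comap.mp hmem
        exact ⟨f, hf⟩
      obtain ⟨f, hf⟩ := hmem'
      apply Submodule.mem_span_singleton.mpr
      refine ⟨-(f ![e (.inl 0)]), ?_⟩
      funext j
      have : Ψ ω j = ω ![e (.inl j.succ), e (.inr j.succ)] := rfl
      rw [this]
      have h1j := congrFun hf ![e (.inl j.succ), e (.inr j.succ)]
      have h2j : ceDelta ℂ g 1 f ![e (.inl j.succ), e (.inr j.succ)]
          = -(lam j * f ![e (.inl 0)]) := by
        show ceDeltaFun ℂ g 1 f _ = _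
        rw [ceDeltaFun_one]
        have hb : ⁅(![e (.inl j.succ), e (.inr j.succ)] : Fin 2 → g) 0,
            (![e (.inl j.succ), e (.inr j.succ)] : Fin 2 → g) 1⁆ = lam j • e (.inl 0) := by
          simpa using br3 he j
        rw [hb, ω1_smul]
      rw [← h1j, h2j]
      simp; ring
  have E1 : (Z ⧸ Submodule.comap Z.subtype (ceB ℂ g 2)) ≃ₗ[ℂ] ((Fin n → ℂ) ⧸ L) :=
    (Submodule.quotEquivOfEq _ _ hker.symm).trans (q.quotKerEquivOfSurjective hsurj)
  have hbet : betti ℂ g 2 = Module.finrank ℂ ((Fin n → ℂ) ⧸ L) := by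
    rw [betti]
    exact E1.finrank_eq
  rw [hbet]
  have hlamne : lam ≠ 0 := fun h => hlam ⟨0, hn⟩ (by rw [h]; rfl)
  have h3 : Module.finrank ℂ L = 1 := finrank_span_singleton hlamne
  have h2 : Module.finrank ℂ ((Fin n → ℂ) ⧸ L) + Module.finrank ℂ L
      = Module.finrank ℂ (Fin n → ℂ) := Submodule.finrank_quotient_add_finrank L
  rw [Module.finrank_pi ℂ, Fintype.card_fin] at h2
  omega

end Final
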